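/- Let σ : [0,1] → ℝ be measurable with 0 < s1 ≤ σ(u) ≤ s2 for all u ∈ [0,1], let T(t) = ∫_0^t σ²(u) du, ρ = T(1), τ = T(t), let c1 < c2, and let I(x,t) = (Φ'(z1) - Φ'(z2))² / ( √(ρ-τ) · (Φ(z2) - Φ(z1)) · (Φ(-z2) + Φ(z1)) ) with z1 = (c1 - x)/√(ρ-τ), z2 = (c2 - x)/√(ρ-τ). Define for t ∈ (0,1) the function G(t) = σ²(t) / ( 2π √(ρ-τ) √(2πτ) ) · ∫_{-∞}^{∞} I(x,t) e^{-x²/2} dx. Then there exists a constant K > 0 such that G(t) ≤ K / √( t(1-t) ) for all t ∈ (0,1). -/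

import Mathlib

open MeasureTheory Real Set Filter

/-- The standard normal density `Φ'(z) = (1/√(2π)) e^{-z²/2}`. -/
noncomputable def Φ' (z : ℝ) : ℝ := (Real.sqrt (2 * Real.pi))⁻¹ * Real.exp (-z ^ 2 / 2)

/-- The standard normal cumulative distribution function `Φ`. -/
noncomputable def Φ (z : ℝ) : ℝ := ∫ u in Set.Iic z, Φ' u


/-- `I(x,t)` of the paper: with `T(t) = ∫_0^t σ²`, `ρ = T(1)`, `τ = T(t)`,
`r = √(ρ - τ)`, `z1 = (c1 - x)/r`, `z2 = (c2 - x)/r`. -/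
noncomputable def Ifun (σ : ℝ → ℝ) (c1 c2 t x : ℝ) : ℝ :=
  let r := Real.sqrt ((∫ u in (0:ℝ)..1, (σ u) ^ 2) - ∫ u in (0:ℝ)..t, (σ u) ^ 2)
  let z1 := (c1 - x) / r
  let z2 := (c2 - x) / r
  (Φ' z1 - Φ' z2) ^ 2 / (r * (Φ z2 - Φ z1) * (Φ (-z2) + Φ z1))

/-- `G(t) = σ²(t)/(2π √(ρ-τ) √(2πτ)) · ∫_ℝ I(x,t) e^{-x²/2} dx`, i.e. `E[α²(t)]`. -/
noncomputable def Gfun (σ : ℝ → ℝ) (c1 c2 t : ℝ) : ℝ :=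
  (σ t) ^ 2 /
      (2 * Real.pi *
        Real.sqrt ((∫ u in (0:ℝ)..1, (σ u) ^ 2) - ∫ u in (0:ℝ)..t, (σ u) ^ 2) *
        Real.sqrt (2 * Real.pi * ∫ u in (0:ℝ)..t, (σ u) ^ 2)) *
    ∫ x : ℝ, Ifun σ c1 c2 t x * Real.exp (-x ^ 2 / 2)


/-!
Put `r = √(ρ - τ)` and `zᵢ = (cᵢ - x) / r`. Then `r · I(x,t)` is the ratio
`J(z₁, z₂) = (Φ'(z₁) - Φ'(z₂))² / ((Φ(z₂) - Φ(z₁)) (Φ(-z₂) + Φ(z₁)))`, and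
`z₂ - z₁ = (c₂ - c₁) / r ≥ d := (c₂ - c₁) / s₂`. Whenever `z₂ ≥ z₁ + d`, `J` is dominated by a
constant (depending on `d` only) times four translated Gaussian densities in `z₁` and `z₂`: for
`z₁ ≥ 0` bound the numerator by `Φ'(z₁)²` and the denominator below by `d Φ'(z₁ + d) Φ'(1)`, and
use `Φ'(z)² = e^{a²} Φ'(z - a) Φ'(z + a)`; the case `z₂ ≤ 0` is its mirror image under
`(z₁, z₂) ↦ (-z₂, -z₁)`; for `z₁ < 0 < z₂` the first factor of the denominator is at least
`(d/2) Φ'(d/2)`, the second at least `Φ'(z₁ - 1)` and `Φ'(-z₂ - 1)`, and the identity is used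
with `a = 1`. Integrating in `x`
(after `e^{-x²/2} ≤ 1`) gives a bound independent of `t`, while the prefactor of `G` is
`O(1 / √(t (1 - t)))` because `τ ≥ s₁² t` and `ρ - τ ≥ s₁² (1 - t)`.
-/

open ProbabilityTheory

lemma Φ'_eq_gaussianPDFReal : Φ' = gaussianPDFReal 0 1 := by
  ext z; simp [Φ', gaussianPDFReal]

lemma Φ'_pos (z : ℝ) : 0 < Φ' z := by
  unfold Φ'; positivity

lemma Φ'_neg (z : ℝ) : Φ' (-z) = Φ' z := by
  simp [Φ']

lemma Φ'_le_of_sq_le {a b : ℝ} (h : a ^ 2 ≤ b ^ 2) : Φ' b ≤ Φ' a := by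
  unfold Φ'; gcongr

lemma Φ'_sq_eq (z a : ℝ) : Φ' z ^ 2 = exp (a ^ 2) * Φ' (z - a) * Φ' (z + a) := by
  have h : exp (-z ^ 2 / 2) ^ 2 =
      exp (a ^ 2) * (exp (-(z - a) ^ 2 / 2) * exp (-(z + a) ^ 2 / 2)) := by
    rw [← exp_add, ← exp_add, ← exp_nat_mul]; ring_nf
  simp only [Φ', mul_pow, h]; ring

lemma integrable_Φ' : Integrable Φ' := by
  rw [Φ'_eq_gaussianPDFReal]; exact integrable_gaussianPDFReal 0 1

lemma integral_Φ' : ∫ z, Φ' z = 1 := by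
  rw [Φ'_eq_gaussianPDFReal]; exact integral_gaussianPDFReal_eq_one 0 one_ne_zero

lemma Φ_sub (a b : ℝ) : Φ b - Φ a = ∫ z in a..b, Φ' z :=
  intervalIntegral.integral_Iic_sub_Iic integrable_Φ'.integrableOn integrable_Φ'.integrableOn

lemma Φ_nonneg (z : ℝ) : 0 ≤ Φ z :=
  setIntegral_nonneg measurableSet_Iic fun u _ => (Φ'_pos u).le

lemma Φ_sub_neg (a b : ℝ) : Φ (-a) - Φ (-b) = Φ b - Φ a := by
  rw [Φ_sub, Φ_sub, ← intervalIntegral.integral_comp_neg]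
  simp only [Φ'_neg]

lemma mul_Φ'_le_Φ_sub {a b R : ℝ} (hab : a ≤ b) (ha : |a| ≤ R) (hb : |b| ≤ R) :
    (b - a) * Φ' R ≤ Φ b - Φ a := by
  rw [Φ_sub, ← smul_eq_mul, ← intervalIntegral.integral_const]
  refine intervalIntegral.integral_mono_on hab intervalIntegrable_const
    integrable_Φ'.intervalIntegrable fun u hu => Φ'_le_of_sq_le (sq_le_sq' ?_ ?_)
  · linarith [(abs_le.1 ha).1, hu.1]
  · linarith [(abs_le.1 hb).2, hu.2]

lemma Φ_mono : Monotone Φ := fun a b hab => by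
  have := mul_Φ'_le_Φ_sub hab (le_max_left |a| |b|) (le_max_right |a| |b|)
  nlinarith [Φ'_pos (max |a| |b|)]

lemma Φ'_one_le_Φ {z : ℝ} (hz : 0 ≤ z) : Φ' 1 ≤ Φ z := by
  have := mul_Φ'_le_Φ_sub (a := -1) (b := 0) (R := 1) (by norm_num) (by norm_num) (by norm_num)
  linarith [Φ_nonneg (-1), Φ_mono hz]

lemma Φ'_sub_one_le_Φ {z : ℝ} (hz : z ≤ 0) : Φ' (z - 1) ≤ Φ z := by
  have := mul_Φ'_le_Φ_sub (a := z - 1) (b := z) (R := 1 - z) (by linarith)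
    (by rw [abs_of_nonpos (by linarith)]; linarith) (by rw [abs_of_nonpos hz]; linarith)
  rw [← Φ'_neg, neg_sub]
  linarith [Φ_nonneg (z - 1)]

noncomputable def normalRatio (z1 z2 : ℝ) : ℝ :=
  (Φ' z1 - Φ' z2) ^ 2 / ((Φ z2 - Φ z1) * (Φ (-z2) + Φ z1))

lemma normalRatio_neg (z1 z2 : ℝ) : normalRatio (-z2) (-z1) = normalRatio z1 z2 := by
  simp only [normalRatio, Φ'_neg, Φ_sub_neg, neg_neg]
  ring

lemma normalRatio_nonneg {z1 z2 : ℝ} (h : z1 ≤ z2) : 0 ≤ normalRatio z1 z2 :=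
  div_nonneg (sq_nonneg _)
    (mul_nonneg (sub_nonneg.2 (Φ_mono h)) (add_nonneg (Φ_nonneg _) (Φ_nonneg _)))

noncomputable def normalEnvelope (d z1 z2 : ℝ) : ℝ :=
  Φ' (z1 - d) + Φ' (z1 + 1) + Φ' (z2 + d) + Φ' (z2 - 1)

lemma normalEnvelope_neg (d z1 z2 : ℝ) :
    normalEnvelope d (-z2) (-z1) = normalEnvelope d z1 z2 := by
  simp only [normalEnvelope, ← Φ'_neg (-z2 - d), ← Φ'_neg (-z2 + 1), ← Φ'_neg (-z1 + d),
    ← Φ'_neg (-z1 - 1)]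
  ring_nf

noncomputable def envelopeConst (d : ℝ) : ℝ :=
  exp (d ^ 2) / (d * Φ' 1) + 2 * exp 1 / (d * Φ' (d / 2))

section normalRatio_le

variable {d z1 z2 : ℝ}

lemma normalRatio_le_of_nonneg (hd : 0 < d) (h1 : 0 ≤ z1) (h12 : z1 + d ≤ z2) :
    normalRatio z1 z2 ≤ exp (d ^ 2) / (d * Φ' 1) * Φ' (z1 - d) := by
  have hnum : (Φ' z1 - Φ' z2) ^ 2 ≤ Φ' z1 ^ 2 := by
    have := Φ'_le_of_sq_le (a := z1) (b := z2) (by nlinarith)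
    nlinarith [Φ'_pos z2]
  have hA : d * Φ' (z1 + d) ≤ Φ z2 - Φ z1 := by
    have := mul_Φ'_le_Φ_sub (a := z1) (b := z1 + d) (R := z1 + d) (by linarith)
      (by rw [abs_of_nonneg h1]; linarith) (abs_of_pos (by linarith)).le
    have := Φ_mono h12
    simp only [add_sub_cancel_left] at *
    linarith
  have hB : Φ' 1 ≤ Φ (-z2) + Φ z1 := by linarith [Φ'_one_le_Φ h1, Φ_nonneg (-z2)]
  have hApos := mul_pos hd (Φ'_pos (z1 + d))
  calc normalRatio z1 z2 ≤ Φ' z1 ^ 2 / (d * Φ' (z1 + d) * Φ' 1) :=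
        div_le_div₀ (sq_nonneg _) hnum (mul_pos hApos (Φ'_pos 1))
          (mul_le_mul hA hB (Φ'_pos 1).le (hApos.le.trans hA))
    _ = exp (d ^ 2) / (d * Φ' 1) * Φ' (z1 - d) := by
        rw [Φ'_sq_eq z1 d]
        field_simp [(Φ'_pos (z1 + d)).ne', (Φ'_pos 1).ne']

lemma sq_Φ'_div_le {z A B a : ℝ} (ha : 0 < a) (hA : a ≤ A) (hB : Φ' (z - 1) ≤ B) :
    Φ' z ^ 2 / (A * B) ≤ exp 1 / a * Φ' (z + 1) :=
  calc Φ' z ^ 2 / (A * B) ≤ Φ' z ^ 2 / (a * Φ' (z - 1)) :=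
        div_le_div_of_nonneg_left (sq_nonneg _) (mul_pos ha (Φ'_pos _))
          (mul_le_mul hA hB (Φ'_pos _).le (ha.le.trans hA))
    _ = exp 1 / a * Φ' (z + 1) := by
        rw [Φ'_sq_eq z 1, one_pow]
        field_simp [(Φ'_pos (z - 1)).ne']

lemma normalRatio_le_of_neg_of_pos (hd : 0 < d) (h1 : z1 < 0) (h2 : 0 < z2)
    (h12 : z1 + d ≤ z2) :
    normalRatio z1 z2 ≤ 2 * exp 1 / (d * Φ' (d / 2)) * (Φ' (z1 + 1) + Φ' (z2 - 1)) := by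
  have hA : d / 2 * Φ' (d / 2) ≤ Φ z2 - Φ z1 := by
    rcases le_total (d / 2) z2 with h | h
    · have := mul_Φ'_le_Φ_sub (a := 0) (b := d / 2) (R := d / 2) (by linarith)
        (by simp; linarith) (abs_of_pos (by linarith)).le
      linarith [Φ_mono h, Φ_mono h1.le]
    · have := mul_Φ'_le_Φ_sub (a := -(d / 2)) (b := 0) (R := d / 2) (by linarith)
        (by simp [abs_of_pos (half_pos hd)]) (by simp; linarith)
      linarith [Φ_mono h2.le, Φ_mono (show z1 ≤ -(d / 2) by linarith)]
  have ha : 0 < d / 2 * Φ' (d / 2) := mul_pos (by linarith) (Φ'_pos _)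
  have hB1 : Φ' (z1 - 1) ≤ Φ (-z2) + Φ z1 := by
    linarith [Φ'_sub_one_le_Φ h1.le, Φ_nonneg (-z2)]
  have hB2 : Φ' (-z2 - 1) ≤ Φ (-z2) + Φ z1 := by
    linarith [Φ'_sub_one_le_Φ (neg_nonpos.2 h2.le), Φ_nonneg z1]
  have hnum : (Φ' z1 - Φ' z2) ^ 2 ≤ Φ' z1 ^ 2 + Φ' (-z2) ^ 2 := by
    rw [Φ'_neg]; nlinarith [Φ'_pos z1, Φ'_pos z2]
  calc normalRatio z1 z2
      ≤ (Φ' z1 ^ 2 + Φ' (-z2) ^ 2) / ((Φ z2 - Φ z1) * (Φ (-z2) + Φ z1)) :=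
        div_le_div_of_nonneg_right hnum
          (mul_nonneg (ha.le.trans hA) (add_nonneg (Φ_nonneg _) (Φ_nonneg _)))
    _ ≤ exp 1 / (d / 2 * Φ' (d / 2)) * Φ' (z1 + 1) +
          exp 1 / (d / 2 * Φ' (d / 2)) * Φ' (-z2 + 1) := by
        rw [add_div]
        exact add_le_add (sq_Φ'_div_le ha hA hB1) (sq_Φ'_div_le ha hA hB2)
    _ = 2 * exp 1 / (d * Φ' (d / 2)) * (Φ' (z1 + 1) + Φ' (z2 - 1)) := by
        rw [show -z2 + 1 = -(z2 - 1) by ring, Φ'_neg]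
        field_simp

lemma normalRatio_le_envelope (hd : 0 < d) (h12 : z1 + d ≤ z2) :
    normalRatio z1 z2 ≤ envelopeConst d * normalEnvelope d z1 z2 := by
  have hC1 : 0 ≤ exp (d ^ 2) / (d * Φ' 1) := by have := Φ'_pos 1; positivity
  have hC2 : 0 ≤ 2 * exp 1 / (d * Φ' (d / 2)) := by have := Φ'_pos (d / 2); positivity
  have hpos : ∀ z1 z2, 0 ≤ normalEnvelope d z1 z2 := fun z1 z2 => by
    unfold normalEnvelope
    linarith [Φ'_pos (z1 - d), Φ'_pos (z1 + 1), Φ'_pos (z2 + d), Φ'_pos (z2 - 1)]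
  have h_of_nonneg : ∀ {z1 z2}, 0 ≤ z1 → z1 + d ≤ z2 →
      normalRatio z1 z2 ≤ envelopeConst d * normalEnvelope d z1 z2 := by
    intro z1 z2 h1 h12
    have := normalRatio_le_of_nonneg hd h1 h12
    have := Φ'_pos (z1 + 1); have := Φ'_pos (z2 + d); have := Φ'_pos (z2 - 1)
    have := hpos z1 z2
    unfold envelopeConst normalEnvelope at *
    nlinarith
  rcases le_or_gt 0 z1 with h1 | h1
  · exact h_of_nonneg h1 h12
  rcases le_or_gt z2 0 with h2 | h2
  · rw [← normalRatio_neg, ← normalEnvelope_neg]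
    exact h_of_nonneg (neg_nonneg.2 h2) (by linarith)
  · have := normalRatio_le_of_neg_of_pos hd h1 h2 h12
    have := Φ'_pos (z1 - d); have := Φ'_pos (z2 + d)
    have := hpos z1 z2
    unfold envelopeConst normalEnvelope at *
    nlinarith

end normalRatio_le

section comp

variable (c a : ℝ) {r : ℝ}

lemma Φ'_comp_eq (hr : r ≠ 0) :
    (fun x => Φ' ((c - x) / r + a)) = fun x => Φ' ((c + a * r - x) / r) := by
  ext x; congr 1; field_simp; ring

lemma integrable_Φ'_comp (hr : r ≠ 0) : Integrable fun x => Φ' ((c - x) / r + a) := by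
  rw [Φ'_comp_eq c a hr]
  exact (integrable_Φ'.comp_div hr).comp_sub_left (c + a * r)

lemma integral_Φ'_comp (hr : 0 < r) : ∫ x, Φ' ((c - x) / r + a) = r := by
  rw [Φ'_comp_eq c a hr.ne', integral_sub_left_eq_self (fun y => Φ' (y / r)),
    Measure.integral_comp_div, integral_Φ', abs_of_pos hr, smul_eq_mul, mul_one]

end comp

section envelope

variable (d c1 c2 : ℝ) {r : ℝ}

lemma normalEnvelope_comp_eq (x : ℝ) :
    normalEnvelope d ((c1 - x) / r) ((c2 - x) / r) =
      Φ' ((c1 - x) / r + -d) + Φ' ((c1 - x) / r + 1) + Φ' ((c2 - x) / r + d) +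
        Φ' ((c2 - x) / r + -1) := by
  simp only [normalEnvelope, sub_eq_add_neg _ d, sub_eq_add_neg _ (1 : ℝ)]

lemma integrable_normalEnvelope_comp (hr : r ≠ 0) :
    Integrable fun x => normalEnvelope d ((c1 - x) / r) ((c2 - x) / r) := by
  simp only [normalEnvelope_comp_eq]
  apply_rules [Integrable.add, integrable_Φ'_comp]

lemma integral_normalEnvelope_comp (hr : 0 < r) :
    ∫ x, normalEnvelope d ((c1 - x) / r) ((c2 - x) / r) = 4 * r := by
  have hi := fun c a => integrable_Φ'_comp c a hr.ne'
  simp only [normalEnvelope_comp_eq]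
  rw [integral_add, integral_add, integral_add]
  · simp only [integral_Φ'_comp _ _ hr]; ring
  all_goals apply_rules [Integrable.add]

end envelope

lemma envelopeConst_pos {d : ℝ} (hd : 0 < d) : 0 < envelopeConst d := by
  have := Φ'_pos 1; have := Φ'_pos (d / 2)
  unfold envelopeConst; positivity

lemma integral_normalRatio_comp_mul_le {c1 c2 r d : ℝ} (hr : 0 < r) (hd : 0 < d)
    (hdr : d * r ≤ c2 - c1) {w : ℝ → ℝ} (hw0 : ∀ x, 0 ≤ w x) (hw1 : ∀ x, w x ≤ 1) :
    ∫ x, normalRatio ((c1 - x) / r) ((c2 - x) / r) / r * w x ≤ 4 * envelopeConst d := by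
  have h12 (x : ℝ) : (c1 - x) / r + d ≤ (c2 - x) / r := by
    rw [div_add' _ _ _ hr.ne', div_le_div_iff_of_pos_right hr]; linarith
  have hratio (x : ℝ) : 0 ≤ normalRatio ((c1 - x) / r) ((c2 - x) / r) / r :=
    div_nonneg (normalRatio_nonneg (by linarith [h12 x])) hr.le
  calc ∫ x, normalRatio ((c1 - x) / r) ((c2 - x) / r) / r * w x
      ≤ ∫ x, envelopeConst d * normalEnvelope d ((c1 - x) / r) ((c2 - x) / r) / r :=
        integral_mono_of_nonneg (ae_of_all _ fun x => mul_nonneg (hratio x) (hw0 x))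
          (((integrable_normalEnvelope_comp d c1 c2 hr.ne').const_mul _).div_const r)
          (ae_of_all _ fun x => (mul_le_of_le_one_right (hratio x) (hw1 x)).trans
            (div_le_div_of_nonneg_right (normalRatio_le_envelope hd (h12 x)) hr.le))
    _ = 4 * envelopeConst d := by
        rw [integral_div, integral_const_mul, integral_normalEnvelope_comp _ _ _ hr]
        field_simp

lemma integral_Ifun_mul_exp_le {σ : ℝ → ℝ} {c1 c2 t d : ℝ} (hd : 0 < d)
    (hR : 0 < (∫ u in (0:ℝ)..1, σ u ^ 2) - ∫ u in (0:ℝ)..t, σ u ^ 2)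
    (hdR : d * √((∫ u in (0:ℝ)..1, σ u ^ 2) - ∫ u in (0:ℝ)..t, σ u ^ 2) ≤ c2 - c1) :
    ∫ x, Ifun σ c1 c2 t x * exp (-x ^ 2 / 2) ≤ 4 * envelopeConst d := by
  set r := √((∫ u in (0:ℝ)..1, σ u ^ 2) - ∫ u in (0:ℝ)..t, σ u ^ 2)
  have hIfun (x : ℝ) : Ifun σ c1 c2 t x = normalRatio ((c1 - x) / r) ((c2 - x) / r) / r := by
    rw [normalRatio, div_div, mul_comm _ r, ← mul_assoc]; rfl
  simpa only [hIfun] using integral_normalRatio_comp_mul_le (sqrt_pos.2 hR) hd hdR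
    (fun x => (exp_pos _).le) fun x => exp_le_one_iff.2 (by nlinarith [sq_nonneg x])

section bounded

variable {f : ℝ → ℝ} {m M a b : ℝ}

lemma intervalIntegrable_of_mem_Icc (hf : Measurable f) (h : ∀ u ∈ uIcc a b, f u ∈ Icc m M) :
    IntervalIntegrable f volume a b :=
  (IntegrableOn.of_bound isCompact_uIcc.measure_lt_top hf.aestronglyMeasurable (max |m| |M|)
    (ae_restrict_of_forall_mem measurableSet_uIcc fun u hu =>
      abs_le_max_abs_abs (h u hu).1 (h u hu).2)).intervalIntegrable

lemma intervalIntegral_mem_Icc (hf : Measurable f) (hab : a ≤ b)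
    (h : ∀ u ∈ Icc a b, f u ∈ Icc m M) :
    ∫ u in a..b, f u ∈ Icc (m * (b - a)) (M * (b - a)) := by
  have hfi := intervalIntegrable_of_mem_Icc hf (by rwa [uIcc_of_le hab])
  constructor
  · simpa [mul_comm] using intervalIntegral.integral_mono_on hab intervalIntegrable_const hfi
      fun u hu => (h u hu).1
  · simpa [mul_comm] using intervalIntegral.integral_mono_on hab hfi intervalIntegrable_const
      fun u hu => (h u hu).2

end bounded

lemma integral_sq_bounds {σ : ℝ → ℝ} (hσ : Measurable σ) {s1 s2 : ℝ} (hs1 : 0 ≤ s1)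
    (hσbd : ∀ u ∈ Icc (0:ℝ) 1, s1 ≤ σ u ∧ σ u ≤ s2) {t : ℝ} (ht : t ∈ Icc (0:ℝ) 1) :
    s1 ^ 2 * t ≤ ∫ u in (0:ℝ)..t, σ u ^ 2 ∧
      (∫ u in (0:ℝ)..1, σ u ^ 2) - ∫ u in (0:ℝ)..t, σ u ^ 2 ∈
        Icc (s1 ^ 2 * (1 - t)) (s2 ^ 2 * (1 - t)) := by
  have hsq {a b : ℝ} (ha : 0 ≤ a) (hb : b ≤ 1) (u : ℝ) (hu : u ∈ Icc a b) :
      σ u ^ 2 ∈ Icc (s1 ^ 2) (s2 ^ 2) := by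
    obtain ⟨h1, h2⟩ := hσbd u ⟨ha.trans hu.1, hu.2.trans hb⟩
    exact ⟨pow_le_pow_left₀ hs1 h1 2, pow_le_pow_left₀ (hs1.trans h1) h2 2⟩
  have hmeas := hσ.pow_const 2
  rw [intervalIntegral.integral_interval_sub_left
    (intervalIntegrable_of_mem_Icc hmeas (by rw [uIcc_of_le zero_le_one]; exact hsq le_rfl le_rfl))
    (intervalIntegrable_of_mem_Icc hmeas (by rw [uIcc_of_le ht.1]; exact hsq le_rfl ht.2))]
  exact ⟨by simpa using (intervalIntegral_mem_Icc hmeas ht.1 (hsq le_rfl ht.2)).1,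
    intervalIntegral_mem_Icc hmeas ht.2 (hsq ht.1 le_rfl)⟩

lemma div_sqrt_mul_sqrt_le {q R τ s1 s2 t : ℝ} (hs1 : 0 < s1) (ht : t ∈ Ioo (0:ℝ) 1)
    (hq : q ≤ s2 ^ 2) (hR : s1 ^ 2 * (1 - t) ≤ R) (hτ : s1 ^ 2 * t ≤ τ) :
    q / (2 * π * √R * √(2 * π * τ)) ≤ s2 ^ 2 / (2 * π * √(2 * π) * s1 ^ 2) / √(t * (1 - t)) := by
  obtain ⟨ht0, ht1⟩ := ht
  have h1t : 0 < √(1 - t) := sqrt_pos.2 (by linarith)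
  have hR' : s1 * √(1 - t) ≤ √R := by
    rw [le_sqrt (by positivity) (by nlinarith), mul_pow, sq_sqrt (by linarith)]; exact hR
  have hτ' : √(2 * π) * (s1 * √t) ≤ √(2 * π * τ) := by
    have : 0 < τ := (by positivity : 0 < s1 ^ 2 * t).trans_le hτ
    rw [le_sqrt (by positivity) (by positivity), mul_pow, mul_pow, sq_sqrt (by positivity),
      sq_sqrt ht0.le]
    nlinarith [pi_pos]
  calc q / (2 * π * √R * √(2 * π * τ))
      ≤ s2 ^ 2 / (2 * π * (s1 * √(1 - t)) * (√(2 * π) * (s1 * √t))) := by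
        gcongr
    _ = s2 ^ 2 / (2 * π * √(2 * π) * s1 ^ 2) / √(t * (1 - t)) := by
        rw [sqrt_mul ht0.le]
        field_simp

/-- `E[α²(t)] = G(t) ≤ K / √(t(1-t))` on `(0,1)` for some constant `K > 0`. -/
theorem G_bound (σ : ℝ → ℝ) (hσ : Measurable σ) (s1 s2 : ℝ) (hs1 : 0 < s1)
    (hσbd : ∀ u ∈ Set.Icc (0:ℝ) 1, s1 ≤ σ u ∧ σ u ≤ s2)
    (c1 c2 : ℝ) (hc : c1 < c2) :
    ∃ K : ℝ, 0 < K ∧ ∀ t ∈ Set.Ioo (0:ℝ) 1,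
      Gfun σ c1 c2 t ≤ K / Real.sqrt (t * (1 - t)) := by
  have hσ0 := hσbd 0 ⟨le_rfl, zero_le_one⟩
  have hs2 : 0 < s2 := hs1.trans_le (hσ0.1.trans hσ0.2)
  set d := (c2 - c1) / s2
  have hd : 0 < d := div_pos (sub_pos.2 hc) hs2
  have hC := envelopeConst_pos hd
  refine ⟨s2 ^ 2 / (2 * π * √(2 * π) * s1 ^ 2) * (4 * envelopeConst d), by positivity,
    fun t ht => ?_⟩
  obtain ⟨hτ, hR1, hR2⟩ := integral_sq_bounds hσ hs1.le hσbd (Ioo_subset_Icc_self ht)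
  set τ := ∫ u in (0:ℝ)..t, σ u ^ 2
  set r := √((∫ u in (0:ℝ)..1, σ u ^ 2) - τ)
  have hR : 0 < (∫ u in (0:ℝ)..1, σ u ^ 2) - τ :=
    (mul_pos (pow_pos hs1 2) (sub_pos.2 ht.2)).trans_le hR1
  have hrs2 : r ≤ s2 := (sqrt_le_sqrt (hR2.trans (mul_le_of_le_one_right (sq_nonneg s2)
    (by linarith [ht.1])))).trans_eq (sqrt_sq hs2.le)
  have hI := integral_Ifun_mul_exp_le (c1 := c1) (c2 := c2) hd hR
    ((mul_le_mul_of_nonneg_left hrs2 hd.le).trans_eq (div_mul_cancel₀ _ hs2.ne'))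
  calc Gfun σ c1 c2 t
      = σ t ^ 2 / (2 * π * r * √(2 * π * τ)) * ∫ x, Ifun σ c1 c2 t x * exp (-x ^ 2 / 2) := rfl
    _ ≤ s2 ^ 2 / (2 * π * √(2 * π) * s1 ^ 2) / √(t * (1 - t)) * (4 * envelopeConst d) := by
        have hσt := hσbd t (Ioo_subset_Icc_self ht)
        exact mul_le_mul_of_nonneg (div_sqrt_mul_sqrt_le hs1 ht
          (pow_le_pow_left₀ (hs1.le.trans hσt.1) hσt.2 2) hR1 hτ) hI
          (div_nonneg (sq_nonneg _) (by positivity)) (by positivity)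
    _ = _ := by ring
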